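/- Truth Lemma for atomic membership: if G is P-generic over (M,𝒞) (meets every dense class in 𝒞), then σ^G ∈ τ^G holds if and only if some p ∈ G satisfies p ⊩* σ ∈ τ, assuming the truth lemma holds for equality of names of lower rank (inductive step). -/

import Mathlib

/-- Formulas of the forcing language: atomic membership and equality of names,
conjunction, negation and universal quantification over (set-)names. -/
inductive FForm (Name : Type*) : Type _
  | mem : Name → Name → FForm Name
  | eq : Name → Name → FForm Name
  | and : FForm Name → FForm Name → FForm Name
  | not : FForm Name → FForm Name
  | all : (Name → FForm Name) → FForm Name

/-- Derived biconditional of the forcing language. -/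
def FForm.iff {Name : Type*} (φ ψ : FForm Name) : FForm Name :=
  .and (.not (.and φ (.not ψ))) (.not (.and ψ (.not φ)))

/-- D is dense below p. -/
def DenseBelow {P : Type*} [Preorder P] (D : Set P) (p : P) : Prop :=
  ∀ q ≤ p, ∃ r ≤ q, r ∈ D

/-- The recursive defining clauses of the forcing relation ⊩*. -/
def ForcingEqs {P : Type*} [Preorder P] {Name : Type*}
    (elems : Name → Set (Name × P)) (forces : P → FForm Name → Prop) : Prop :=
  (∀ p σ τ, forces p (.mem σ τ) ↔
      DenseBelow {q | ∃ π r, (π, r) ∈ elems τ ∧ q ≤ r ∧ forces q (.eq π σ)} p) ∧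
  (∀ p σ τ, forces p (.eq σ τ) ↔
      ∀ π r, (π, r) ∈ elems σ ∪ elems τ →
        forces p (FForm.iff (.mem π σ) (.mem π τ))) ∧
  (∀ p φ ψ, forces p (.and φ ψ) ↔ forces p φ ∧ forces p ψ) ∧
  (∀ p φ, forces p (.not φ) ↔ ∀ q ≤ p, ¬ forces q φ) ∧
  (∀ p F, forces p (.all F) ↔ ∀ σ, forces p (F σ))

/-! Forcing of `π = σ` is preserved by strengthening the condition, since it is built from
negations. Hence if `σ^G = π^G` with `(π, r) ∈ τ`, `r ∈ G`, a common extension in `G` of `r` and of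
a condition forcing `π = σ` forces `σ ∈ τ`. Conversely, the dense set witnessing `p ⊩* σ ∈ τ` is
met by `G`, which yields such a `π` together with the induction hypothesis. -/

namespace ForcingEqs

variable {P : Type*} [Preorder P] {Name : Type*}
  {elems : Name → Set (Name × P)} {forces : P → FForm Name → Prop}

theorem forces_not_mono (h : ForcingEqs elems forces) {p q : P} (hqp : q ≤ p)
    {φ : FForm Name} (hp : forces p (.not φ)) : forces q (.not φ) := by
  rw [h.2.2.2.1] at hp ⊢
  exact fun s hs => hp s (hs.trans hqp)

theorem forces_iff_mono (h : ForcingEqs elems forces) {p q : P} (hqp : q ≤ p)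
    {φ ψ : FForm Name} (hp : forces p (φ.iff ψ)) : forces q (φ.iff ψ) := by
  rw [FForm.iff, h.2.2.1] at hp ⊢
  exact ⟨h.forces_not_mono hqp hp.1, h.forces_not_mono hqp hp.2⟩

theorem forces_eq_mono (h : ForcingEqs elems forces) {p q : P} (hqp : q ≤ p)
    {σ τ : Name} (hp : forces p (.eq σ τ)) : forces q (.eq σ τ) := by
  rw [h.2.1] at hp ⊢
  exact fun π r hπr => h.forces_iff_mono hqp (hp π r hπr)

theorem forces_mem_of_forces_eq (h : ForcingEqs elems forces) {σ τ π : Name} {r p : P}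
    (hπr : (π, r) ∈ elems τ) (hpr : p ≤ r) (hp : forces p (.eq π σ)) :
    forces p (.mem σ τ) := by
  rw [h.1]
  exact fun q hqp => ⟨q, le_rfl, π, r, hπr, hqp.trans hpr, h.forces_eq_mono hqp hp⟩

end ForcingEqs

theorem truth_lemma_mem_general {P : Type*} [Preorder P] {Name : Type*}
    (elems : Name → Set (Name × P)) (forces : P → FForm Name → Prop)
    (h : ForcingEqs elems forces)
    (G : Set P)
    (hup : ∀ p ∈ G, ∀ q, p ≤ q → q ∈ G)
    (hdir : ∀ p ∈ G, ∀ q ∈ G, ∃ r ∈ G, r ≤ p ∧ r ≤ q)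
    (hgen : ∀ D : Set P, ∀ p ∈ G, DenseBelow D p → (G ∩ D).Nonempty)
    (interp : Name → ZFSet)
    (hinterp : ∀ (τ : Name) (x : ZFSet), x ∈ interp τ ↔
      ∃ π r, (π, r) ∈ elems τ ∧ r ∈ G ∧ x = interp π)
    (σ τ : Name)
    (hIH : ∀ (π : Name) (r : P), (π, r) ∈ elems τ →
      (interp π = interp σ ↔ ∃ p ∈ G, forces p (.eq π σ))) :
    interp σ ∈ interp τ ↔ ∃ p ∈ G, forces p (.mem σ τ) := by
  constructor
  · intro hσ
    obtain ⟨π, r, hπr, hrG, hσπ⟩ := (hinterp τ (interp σ)).1 hσ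
    obtain ⟨p, hpG, hp⟩ := (hIH π r hπr).1 hσπ.symm
    obtain ⟨s, hsG, hsr, hsp⟩ := hdir r hrG p hpG
    exact ⟨s, hsG, h.forces_mem_of_forces_eq hπr hsr (h.forces_eq_mono hsp hp)⟩
  · rintro ⟨p, hpG, hp⟩
    obtain ⟨q, hqG, π, r, hπr, hqr, hq⟩ := hgen _ p hpG ((h.1 p σ τ).1 hp)
    have hπσ : interp π = interp σ := (hIH π r hπr).2 ⟨q, hqG, hq⟩
    exact (hinterp τ (interp σ)).2 ⟨π, r, hπr, hup q hqG r hqr, hπσ.symm⟩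

/-- Truth Lemma for atomic membership: for generic G,
σ^G ∈ τ^G iff some p ∈ G forces σ ∈ τ, assuming (inductive step) the truth lemma
for equality of names of lower rank. -/
theorem truth_lemma_mem {P : Type*} [Preorder P] {Name : Type*}
    (elems : Name → Set (Name × P)) (forces : P → FForm Name → Prop)
    (h : ForcingEqs elems forces)
    (rank : Name → Ordinal)
    (hrank : ∀ (π : Name) (r : P) (τ : Name), (π, r) ∈ elems τ → rank π < rank τ)
    (G : Set P)
    (hup : ∀ p ∈ G, ∀ q, p ≤ q → q ∈ G)
    (hdir : ∀ p ∈ G, ∀ q ∈ G, ∃ r ∈ G, r ≤ p ∧ r ≤ q)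
    (hgen : ∀ D : Set P, ∀ p ∈ G, DenseBelow D p → (G ∩ D).Nonempty)
    (interp : Name → ZFSet)
    (hinterp : ∀ (τ : Name) (x : ZFSet), x ∈ interp τ ↔
      ∃ π r, (π, r) ∈ elems τ ∧ r ∈ G ∧ x = interp π)
    (σ τ : Name)
    (hIH : ∀ (π : Name) (r : P), (π, r) ∈ elems τ →
      (interp π = interp σ ↔ ∃ p ∈ G, forces p (.eq π σ))) :
    interp σ ∈ interp τ ↔ ∃ p ∈ G, forces p (.mem σ τ) :=
  truth_lemma_mem_general elems forces h G hup hdir hgen interp hinterp σ τ hIH
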